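/- arXiv:2505.22838 — 10 statements merged into one kernel-verified Lean document; each statement's English description precedes it below -/
import Mathlib

section
/- If there exists an orthogonal array OA_λ(k,n) with k ≥ 2, n ≥ 2, λ ≥ 1, then λ ≥ (k(n−1)+1)/n², equivalently k ≤ (λn²−1)/(n−1) (Plackett–Burman bound). -/
theorem plackett_burman (k n lam : ℕ) (hk : 2 ≤ k) (hn : 2 ≤ n) (hlam : 1 ≤ lam)
    (A : Fin (lam * n ^ 2) → Fin k → Fin n)
    (hOA : ∀ c₁ c₂ : Fin k, c₁ ≠ c₂ → ∀ x y : Fin n,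
      (Finset.univ.filter (fun i => A i c₁ = x ∧ A i c₂ = y)).card = lam) :
    (lam : ℝ) ≥ ((k : ℝ) * ((n : ℝ) - 1) + 1) / (n : ℝ) ^ 2 := by
  have hN : 0 < lam * n ^ 2 := Nat.mul_pos (by omega) (by positivity)
  set r0 : Fin (lam * n ^ 2) := ⟨0, hN⟩ with hr0
  set d : Fin (lam * n ^ 2) → ℕ :=
    fun i => (Finset.univ.filter (fun c => A i c = A r0 c)).card with hd
  haveI : Nontrivial (Fin k) := Fin.nontrivial_iff_two_le.mpr hk
  -- column count
  have hcol : ∀ c : Fin k,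
      (Finset.univ.filter (fun i => A i c = A r0 c)).card = lam * n := by
    intro c
    obtain ⟨c', hc'⟩ := exists_ne c
    rw [Finset.card_eq_sum_card_fiberwise
      (f := fun i => A i c') (t := Finset.univ) (fun x _ => Finset.mem_univ _)]
    have h1 : ∀ y : Fin n,
        ((Finset.univ.filter (fun i => A i c = A r0 c)).filter
          (fun i => A i c' = y)).card = lam := by
      intro y
      rw [Finset.filter_filter]
      exact hOA c c' (Ne.symm hc') (A r0 c) y
    simp [h1, mul_comm]
  -- row 0 has d = k
  have hd0 : d r0 = k := by simp [hd]
  -- sum of d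
  have hsum1 : ∑ i, d i = k * (lam * n) := by
    have : ∑ i, d i = ∑ c : Fin k,
        (Finset.univ.filter (fun i => A i c = A r0 c)).card := by
      simp only [hd, Finset.card_filter]
      rw [Finset.sum_comm]
    rw [this]
    simp [hcol]
  -- sum of d^2
  have hsum2 : ∑ i, d i * d i = k * (lam * n) + k * (k - 1) * lam := by
    have key : ∀ i, d i * d i = ∑ c₁ : Fin k, ∑ c₂ : Fin k,
        (if A i c₁ = A r0 c₁ ∧ A i c₂ = A r0 c₂ then 1 else 0) := by
      intro i
      simp only [hd, Finset.card_filter]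
      rw [Finset.sum_mul_sum]
      congr 1; ext c₁; congr 1; ext c₂
      by_cases h1 : A i c₁ = A r0 c₁ <;> by_cases h2 : A i c₂ = A r0 c₂ <;>
        simp [h1, h2]
    calc ∑ i, d i * d i
        = ∑ c₁ : Fin k, ∑ c₂ : Fin k, (Finset.univ.filter
            (fun i => A i c₁ = A r0 c₁ ∧ A i c₂ = A r0 c₂)).card := by
          simp only [key, Finset.card_filter]
          rw [Finset.sum_comm]
          congr 1; ext c₁
          rw [Finset.sum_comm]
      _ = ∑ c₁ : Fin k, (lam * n + (k - 1) * lam) := by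
          refine Finset.sum_congr rfl fun c₁ _ => ?_
          rw [← Finset.add_sum_erase _ _ (Finset.mem_univ c₁)]
          have hdiag : (Finset.univ.filter
              (fun i => A i c₁ = A r0 c₁ ∧ A i c₁ = A r0 c₁)).card = lam * n := by
            simp only [and_self]
            exact hcol c₁
          rw [hdiag]
          congr 1
          rw [Finset.sum_congr rfl (fun c₂ hc₂ => hOA c₁ c₂
            (Ne.symm (Finset.ne_of_mem_erase hc₂)) (A r0 c₁) (A r0 c₂))]
          simp [Finset.card_erase_of_mem, mul_comm]
      _ = k * (lam * n + (k - 1) * lam) := by simp [mul_comm]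
      _ = k * (lam * n) + k * (k - 1) * lam := by ring
  -- restrict to rows ≠ 0
  set s : Finset (Fin (lam * n ^ 2)) := Finset.univ.erase r0 with hs
  have hscard : s.card = lam * n ^ 2 - 1 := by
    simp [hs, Finset.card_erase_of_mem]
  have hsum1' : (∑ i ∈ s, (d i : ℝ)) = k * (lam * n) - k := by
    have h2 := Finset.sum_erase_add Finset.univ d (Finset.mem_univ r0)
    rw [hd0, hsum1] at h2
    have := congrArg (fun x : ℕ => (x : ℝ)) h2
    push_cast at this
    simp only [hs]
    linarith
  have hsum2' : (∑ i ∈ s, (d i : ℝ) ^ 2)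
      = k * (lam * n) + k * ((k : ℝ) - 1) * lam - k ^ 2 := by
    have h2 := Finset.sum_erase_add Finset.univ (fun i => d i * d i) (Finset.mem_univ r0)
    simp only [hd0, hsum2] at h2
    have := congrArg (fun x : ℕ => (x : ℝ)) h2
    push_cast [Nat.cast_sub (by omega : 1 ≤ k)] at this
    have e : ∀ i ∈ s, ((d i * d i : ℕ) : ℝ) = (d i : ℝ) ^ 2 := by
      intro i _; push_cast; ring
    rw [← Finset.sum_congr rfl e]
    push_cast
    simp only [hs]
    linarith
  -- Cauchy-Schwarz
  have hCS := sq_sum_le_card_mul_sum_sq (s := s) (f := fun i => (d i : ℝ))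
  rw [hsum1', hsum2', hscard] at hCS
  have hcast : ((lam * n ^ 2 - 1 : ℕ) : ℝ) = (lam : ℝ) * n ^ 2 - 1 := by
    push_cast [Nat.cast_sub (by omega : 1 ≤ lam * n ^ 2)]
    ring
  rw [hcast] at hCS
  -- final algebra
  have hk' : (2 : ℝ) ≤ k := by exact_mod_cast hk
  have hn' : (2 : ℝ) ≤ n := by exact_mod_cast hn
  have hl' : (1 : ℝ) ≤ lam := by exact_mod_cast hlam
  rw [ge_iff_le, div_le_iff₀ (by positivity)]
  have hpos : (0:ℝ) < (k:ℝ) * lam * ((n:ℝ) - 1) :=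
    mul_pos (mul_pos (by linarith) (by linarith)) (by linarith)
  have hfac : ((lam:ℝ) * n ^ 2 - 1) * ((k:ℝ) * (lam * n) + k * ((k:ℝ) - 1) * lam - k ^ 2)
      - ((k:ℝ) * (lam * n) - k) ^ 2
      = (k:ℝ) * lam * ((n:ℝ) - 1) * ((lam:ℝ) * n ^ 2 - 1 - k * ((n:ℝ) - 1)) := by ring
  have hprod : (0:ℝ) ≤ (k:ℝ) * lam * ((n:ℝ) - 1) * ((lam:ℝ) * n ^ 2 - 1 - k * ((n:ℝ) - 1)) := by
    linarith [hCS, hfac]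
  have hX : (0:ℝ) ≤ (lam:ℝ) * n ^ 2 - 1 - k * ((n:ℝ) - 1) := by
    by_contra hc
    push_neg at hc
    nlinarith [mul_pos hpos (by linarith : (0:ℝ) < -((lam:ℝ) * n ^ 2 - 1 - k * ((n:ℝ) - 1)))]
  linarith
end

section
/- If there exists an OA_λ(k,n) (k ≥ 2, n ≥ 2, λ ≥ 1) containing a row repeated m times, then λ ≥ m(k(n−1)+1)/n². -/
theorem plackett_burman_repeated (k n lam m : ℕ)
    (hk : 2 ≤ k) (hn : 2 ≤ n) (hlam : 1 ≤ lam)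
    (A : Fin (lam * n ^ 2) → Fin k → Fin n)
    (hOA : ∀ c₁ c₂ : Fin k, c₁ ≠ c₂ → ∀ x y : Fin n,
      (Finset.univ.filter (fun i => A i c₁ = x ∧ A i c₂ = y)).card = lam)
    (hrep : ∃ S : Finset (Fin (lam * n ^ 2)), S.card = m ∧
      ∀ i ∈ S, ∀ j ∈ S, A i = A j) :
    (lam : ℝ) ≥ (m : ℝ) * ((k : ℝ) * ((n : ℝ) - 1) + 1) / (n : ℝ) ^ 2 := by
  have hn0 : (0:ℝ) < (n:ℝ)^2 := by positivity
  rw [ge_iff_le, div_le_iff₀ hn0]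
  -- reduce to an integer inequality
  suffices h : (m:ℤ) * (k*(n-1)+1) ≤ lam * n^2 by
    have h' : ((m:ℝ)) * ((k:ℝ)*((n:ℝ)-1)+1) ≤ (lam:ℝ) * (n:ℝ)^2 := by
      exact_mod_cast h
    linarith
  obtain ⟨S, hScard, hSrow⟩ := hrep
  rcases Nat.eq_zero_or_pos m with hm0 | hm
  · subst hm0
    have : (0:ℤ) ≤ (lam:ℤ) * n^2 := by positivity
    simpa using this
  have hSne : S.Nonempty := Finset.card_pos.1 (hScard ▸ hm)
  obtain ⟨i₀, hi₀⟩ := hSne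
  set r : Fin k → Fin n := A i₀ with hr
  -- the number of rows is an upper bound for m
  have hmle : m ≤ lam * n^2 := by
    calc m = S.card := hScard.symm
    _ ≤ Finset.univ.card := Finset.card_le_card (Finset.subset_univ S)
    _ = lam * n^2 := by simp
  -- two distinct columns
  have hc01 : (⟨0, by omega⟩ : Fin k) ≠ ⟨1, by omega⟩ := by
    intro h; simpa using congrArg Fin.val h
  -- rule out m = lam * n^2
  rcases eq_or_lt_of_le hmle with hmeq | hmlt
  · exfalso
    have hSuniv : S = Finset.univ := Finset.eq_univ_of_card S (by simp [hScard, hmeq])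
    haveI : Nontrivial (Fin n) := Fin.nontrivial_iff_two_le.mpr hn
    obtain ⟨y, hy⟩ := exists_ne (A i₀ ⟨1, by omega⟩)
    have := hOA ⟨0, by omega⟩ ⟨1, by omega⟩ hc01 (A i₀ ⟨0, by omega⟩) y
    rw [Finset.filter_false_of_mem, Finset.card_empty] at this
    · omega
    · intro i _
      have : A i = A i₀ := hSrow i (hSuniv ▸ Finset.mem_univ i) i₀ hi₀
      rw [this]
      exact fun hc => hy hc.2.symm
  -- agreement counts
  set a : Fin (lam * n^2) → ℕ :=
    fun i => (Finset.univ.filter (fun c => A i c = r c)).card with ha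
  -- each column: n * lam rows agree with r there
  have col : ∀ c : Fin k, (Finset.univ.filter (fun i => A i c = r c)).card = n * lam := by
    intro c
    obtain ⟨c', hc'⟩ : ∃ c' : Fin k, c' ≠ c := by
      rcases eq_or_ne c ⟨0, by omega⟩ with h | h
      · exact ⟨⟨1, by omega⟩, by rw [h]; exact hc01.symm⟩
      · exact ⟨⟨0, by omega⟩, fun hc => h hc.symm⟩
    have hsplit : (Finset.univ.filter (fun i => A i c = r c))
        = Finset.univ.biUnion (fun y : Fin n =>
            Finset.univ.filter (fun i => A i c = r c ∧ A i c' = y)) := by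
      ext i; simp
    rw [hsplit, Finset.card_biUnion]
    · have key : ∀ y : Fin n,
          (Finset.univ.filter (fun i => A i c = r c ∧ A i c' = y)).card = lam := by
        intro y
        have h1 := hOA c' c hc' y (r c)
        have heq : (Finset.univ.filter (fun i => A i c = r c ∧ A i c' = y))
            = (Finset.univ.filter (fun i => A i c' = y ∧ A i c = r c)) := by
          ext i; simp [and_comm]
        rw [heq, h1]
      calc (∑ y : Fin n, (Finset.univ.filter
              (fun i => A i c = r c ∧ A i c' = y)).card)
          = ∑ _y : Fin n, lam := Finset.sum_congr rfl (fun y _ => key y)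
        _ = n * lam := by simp [mul_comm]
    · intro y _ z _ hyz
      simp only [Finset.disjoint_left, Finset.mem_filter]
      rintro i ⟨_, _, h1⟩ ⟨_, _, h2⟩
      exact hyz (h1 ▸ h2 ▸ rfl)
  -- pairs of distinct columns
  have pair : ∀ c₁ c₂ : Fin k, c₁ ≠ c₂ →
      (Finset.univ.filter (fun i => A i c₁ = r c₁ ∧ A i c₂ = r c₂)).card = lam :=
    fun c₁ c₂ h => hOA c₁ c₂ h (r c₁) (r c₂)
  -- a i as a sum of indicators
  have haind : ∀ i, a i = ∑ c : Fin k, (if A i c = r c then 1 else 0) := by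
    intro i; exact Finset.card_filter _ _
  -- indicator sums over rows
  have ind1 : ∀ c : Fin k,
      (∑ i, (if A i c = r c then (1:ℕ) else 0)) = n * lam := by
    intro c; rw [← Finset.card_filter]; exact col c
  have ind2 : ∀ c₁ c₂ : Fin k, c₁ ≠ c₂ →
      (∑ i, (if A i c₁ = r c₁ ∧ A i c₂ = r c₂ then (1:ℕ) else 0)) = lam := by
    intro c₁ c₂ h; rw [← Finset.card_filter]; exact pair c₁ c₂ h
  -- first moment
  have Sum1 : ∑ i, a i = k * (n * lam) := by
    simp only [haind]
    rw [Finset.sum_comm]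
    calc (∑ c : Fin k, ∑ i, (if A i c = r c then (1:ℕ) else 0))
        = ∑ _c : Fin k, n * lam := Finset.sum_congr rfl (fun c _ => ind1 c)
      _ = k * (n * lam) := by simp
  -- second moment
  have Sum2 : ∑ i, (a i)^2 = k * (k-1) * lam + k * (n * lam) := by
    have expand : ∀ i, (a i)^2
        = ∑ c₁ : Fin k, ∑ c₂ : Fin k,
            (if A i c₁ = r c₁ ∧ A i c₂ = r c₂ then (1:ℕ) else 0) := by
      intro i
      rw [haind, sq, Finset.sum_mul_sum]
      refine Finset.sum_congr rfl (fun c₁ _ => Finset.sum_congr rfl (fun c₂ _ => ?_))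
      by_cases h1 : A i c₁ = r c₁ <;> by_cases h2 : A i c₂ = r c₂ <;>
        simp [h1, h2]
    calc (∑ i, (a i)^2)
        = ∑ i, ∑ c₁ : Fin k, ∑ c₂ : Fin k,
            (if A i c₁ = r c₁ ∧ A i c₂ = r c₂ then (1:ℕ) else 0) :=
          Finset.sum_congr rfl (fun i _ => expand i)
      _ = ∑ c₁ : Fin k, ∑ c₂ : Fin k, ∑ i,
            (if A i c₁ = r c₁ ∧ A i c₂ = r c₂ then (1:ℕ) else 0) := by
          rw [Finset.sum_comm]
          exact Finset.sum_congr rfl (fun c₁ _ => Finset.sum_comm)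
      _ = ∑ c₁ : Fin k, ((k-1) * lam + n * lam) := by
          refine Finset.sum_congr rfl (fun c₁ _ => ?_)
          rw [← Finset.sum_erase_add _ _ (Finset.mem_univ c₁)]
          congr 1
          · calc (∑ c₂ ∈ Finset.univ.erase c₁, ∑ i,
                  (if A i c₁ = r c₁ ∧ A i c₂ = r c₂ then (1:ℕ) else 0))
                = ∑ c₂ ∈ Finset.univ.erase c₁, lam :=
                  Finset.sum_congr rfl (fun c₂ hc₂ =>
                    ind2 c₁ c₂ (Finset.ne_of_mem_erase hc₂).symm)
              _ = (k-1) * lam := by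
                  rw [Finset.sum_const, Finset.card_erase_of_mem (Finset.mem_univ c₁)]
                  simp [mul_comm]
          · simpa using ind1 c₁
      _ = k * ((k-1) * lam + n * lam) := by simp
      _ = k * (k-1) * lam + k * (n * lam) := by ring
  -- rows in S agree with r everywhere
  have aS : ∀ i ∈ S, a i = k := by
    intro i hi
    have : A i = r := hSrow i hi i₀ hi₀
    simp [ha, this]
  -- integer versions
  have S1 : (∑ i, ((a i : ℤ))) = k * (n * lam) := by
    exact_mod_cast Sum1
  have S2 : (∑ i, ((a i : ℤ))^2) = k * ((k:ℤ)-1) * lam + k * (n * lam) := by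
    have h2 : ((∑ i, (a i)^2 : ℕ) : ℤ) = ((k * (k-1) * lam + k * (n * lam) : ℕ) : ℤ) :=
      congrArg _ Sum2
    push_cast [Nat.cast_sub (by omega : 1 ≤ k)] at h2
    convert h2 using 2
  -- the quadratic inequality
  set c : ℤ := (k:ℤ) * ((lam:ℤ) * n - m) with hc
  set d : ℤ := (lam:ℤ) * n^2 - m with hd
  have key : (m:ℤ) * (d * k - c)^2 ≤ ∑ i, (d * (a i : ℤ) - c)^2 := by
    calc (m:ℤ) * (d * k - c)^2
        = ∑ i ∈ S, (d * (a i : ℤ) - c)^2 := by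
          rw [Finset.sum_congr rfl (fun i hi => by rw [aS i hi])]
          rw [Finset.sum_const, hScard]
          ring
      _ ≤ ∑ i, (d * (a i : ℤ) - c)^2 :=
          Finset.sum_le_sum_of_subset_of_nonneg (Finset.subset_univ S)
            (fun i _ _ => sq_nonneg _)
  have expand2 : (∑ i, (d * (a i : ℤ) - c)^2)
      = d^2 * (∑ i, ((a i : ℤ))^2) - 2*c*d*(∑ i, ((a i : ℤ))) + c^2 * (lam * n^2) := by
    have step : ∀ i : Fin (lam * n^2), (d * (a i : ℤ) - c)^2
        = d^2 * ((a i : ℤ))^2 - 2*c*d*(a i : ℤ) + c^2 := fun i => by ring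
    rw [Finset.sum_congr rfl (fun i _ => step i), Finset.sum_add_distrib,
      Finset.sum_sub_distrib, ← Finset.mul_sum, ← Finset.mul_sum,
      Finset.sum_const, Finset.card_univ]
    simp only [Fintype.card_fin]
    ring
  rw [expand2, S1, S2] at key
  -- key : m*(d*k-c)^2 ≤ d^2*(k*(k-1)*lam + k*(n*lam)) - 2cd*(k*(n*lam)) + c^2*lam*n^2
  have hdpos : 0 < d := by
    rw [hd]
    have : (m:ℤ) < (lam:ℤ) * n^2 := by exact_mod_cast hmlt
    linarith
  have identity : (lam:ℤ) * k * ((n:ℤ)-1) * d * ((lam:ℤ)*n^2 - m*((k:ℤ)*((n:ℤ)-1)+1))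
      = (d^2 * ((k:ℤ) * ((k:ℤ)-1) * lam + k * (n * lam)) - 2*c*d*((k:ℤ) * (n * lam))
          + c^2 * (lam * n^2)) - (m:ℤ) * (d * k - c)^2 := by
    rw [hc, hd]; ring
  have hfac : (0:ℤ) ≤ (lam:ℤ) * k * ((n:ℤ)-1) * d
      * ((lam:ℤ)*n^2 - m*((k:ℤ)*((n:ℤ)-1)+1)) := by
    rw [identity]; linarith
  have hppos : (0:ℤ) < (lam:ℤ) * k * ((n:ℤ)-1) * d := by
    have h1 : (0:ℤ) < (lam:ℤ) := by exact_mod_cast hlam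
    have h2 : (0:ℤ) < (k:ℤ) := by exact_mod_cast (by omega : 0 < k)
    have h3 : (0:ℤ) < (n:ℤ)-1 := by
      have : (2:ℤ) ≤ (n:ℤ) := by exact_mod_cast hn
      linarith
    positivity
  have hfinal : (0:ℤ) ≤ (lam:ℤ)*n^2 - m*((k:ℤ)*((n:ℤ)-1)+1) := by
    by_contra hneg
    push_neg at hneg
    have := mul_neg_of_pos_of_neg hppos hneg
    linarith
  linarith
end

section
/- Let A be an m × n 0–1 matrix in which every row has weight r, the inner product of any two distinct rows is at most λ, r > λ, and r² − nλ > 0. Then m ≤ n(r−λ)/(r² − nλ). -/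
theorem second_johnson_matrix (m n r lam : ℕ)
    (A : Fin m → Fin n → ℕ)
    (h01 : ∀ i j, A i j = 0 ∨ A i j = 1)
    (hrow : ∀ i, ∑ j, A i j = r)
    (hip : ∀ i i' : Fin m, i ≠ i' → ∑ j, A i j * A i' j ≤ lam)
    (hrl : r > lam)
    (hpos : (r : ℝ) ^ 2 - (n : ℝ) * lam > 0) :
    (m : ℝ) ≤ (n : ℝ) * ((r : ℝ) - lam) / ((r : ℝ) ^ 2 - (n : ℝ) * lam) := by
  have hrl' : (lam : ℝ) < r := by exact_mod_cast hrl
  rcases Nat.eq_zero_or_pos m with hm | hm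
  · subst hm
    simp only [Nat.cast_zero]
    apply div_nonneg _ (le_of_lt hpos)
    have : (0:ℝ) ≤ (r:ℝ) - lam := by linarith
    positivity
  have hm1 : (1:ℝ) ≤ m := by exact_mod_cast hm
  set c : Fin n → ℝ := fun j => ∑ i, (A i j : ℝ) with hc
  have hsum : ∑ j, c j = m * r := by
    rw [Finset.sum_comm]
    have : ∀ i : Fin m, ∑ j, (A i j : ℝ) = r := by
      intro i
      rw [← Nat.cast_sum, hrow]
    rw [Finset.sum_congr rfl fun i _ => this i]
    simp [mul_comm]
  -- diagonal inner product
  have hdiag : ∀ i : Fin m, ∑ j, (A i j : ℝ) * (A i j : ℝ) = r := by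
    intro i
    have : ∀ j : Fin n, (A i j : ℝ) * (A i j : ℝ) = (A i j : ℝ) := by
      intro j
      rcases h01 i j with h | h <;> rw [h] <;> norm_num
    rw [Finset.sum_congr rfl fun j _ => this j, ← Nat.cast_sum, hrow]
  have hip' : ∀ i i' : Fin m, i ≠ i' → ∑ j, (A i j : ℝ) * (A i' j : ℝ) ≤ lam := by
    intro i i' h
    have := hip i i' h
    calc ∑ j, (A i j : ℝ) * (A i' j : ℝ) = ((∑ j, A i j * A i' j : ℕ) : ℝ) := by
          push_cast; ring_nf
      _ ≤ lam := by exact_mod_cast this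
  have hS2 : ∑ j, (c j) ^ 2 ≤ m * r + m * (m - 1) * lam := by
    have expand : ∑ j, (c j) ^ 2 = ∑ i : Fin m, ∑ i' : Fin m, ∑ j, (A i j : ℝ) * (A i' j : ℝ) := by
      have : ∀ j : Fin n, (c j) ^ 2 = ∑ i : Fin m, ∑ i' : Fin m, (A i j : ℝ) * (A i' j : ℝ) := by
        intro j
        rw [hc, sq, Finset.sum_mul_sum]
      rw [Finset.sum_congr rfl fun j _ => this j]
      rw [Finset.sum_comm]
      congr 1; ext i
      rw [Finset.sum_comm]
    rw [expand]
    have hbound : ∀ i : Fin m, ∑ i' : Fin m, ∑ j, (A i j : ℝ) * (A i' j : ℝ)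
        ≤ r + (m - 1) * lam := by
      intro i
      rw [← Finset.add_sum_erase _ _ (Finset.mem_univ i), hdiag i]
      have : ∑ i' ∈ Finset.univ.erase i, ∑ j, (A i j : ℝ) * (A i' j : ℝ)
          ≤ ∑ i' ∈ Finset.univ.erase i, (lam : ℝ) := by
        apply Finset.sum_le_sum
        intro i' hi'
        exact hip' i i' (Ne.symm (Finset.ne_of_mem_erase hi'))
      rw [Finset.sum_const, Finset.card_erase_of_mem (Finset.mem_univ i),
        Finset.card_univ, Fintype.card_fin] at this
      have hcast : ((m - 1 : ℕ) : ℝ) = (m : ℝ) - 1 := by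
        rw [Nat.cast_sub hm]; norm_num
      rw [nsmul_eq_mul, hcast] at this
      linarith
    calc ∑ i : Fin m, ∑ i' : Fin m, ∑ j, (A i j : ℝ) * (A i' j : ℝ)
        ≤ ∑ _i : Fin m, ((r : ℝ) + ((m : ℝ) - 1) * lam) := Finset.sum_le_sum fun i _ => hbound i
      _ = m * r + m * (m - 1) * lam := by
          rw [Finset.sum_const, Finset.card_univ, Fintype.card_fin, nsmul_eq_mul]; ring
  have hCS : (∑ j, c j) ^ 2 ≤ n * ∑ j, (c j) ^ 2 := by
    have := sq_sum_le_card_mul_sum_sq (s := Finset.univ) (f := c)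
    simpa using this
  rw [hsum] at hCS
  have key : ((m : ℝ) * r) ^ 2 ≤ n * (m * r + m * (m - 1) * lam) := by
    calc ((m : ℝ) * r) ^ 2 ≤ n * ∑ j, (c j) ^ 2 := hCS
      _ ≤ n * (m * r + m * (m - 1) * lam) := by
          apply mul_le_mul_of_nonneg_left hS2 (by positivity)
  rw [le_div_iff₀ hpos]
  nlinarith [key, hm1, mul_pos (lt_of_lt_of_le zero_lt_one hm1) hpos]
end

section
/- Let 𝒞 be a binary code of length n in which every codeword has Hamming weight r and any two distinct codewords have Hamming distance at least d = 2δ with r > δ > 0. If r² − n(r−δ) > 0, then |𝒞| ≤ nδ/(r² − n(r−δ)) (Second Johnson Bound). -/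
open Finset

theorem second_johnson_code (n r δ : ℕ)
    (C : Finset (Fin n → Bool))
    (hw : ∀ x ∈ C, (Finset.univ.filter (fun i => x i = true)).card = r)
    (hd : ∀ x ∈ C, ∀ y ∈ C, x ≠ y →
      2 * δ ≤ (Finset.univ.filter (fun i => x i ≠ y i)).card)
    (hrδ : r > δ) (hδ : 0 < δ)
    (hpos : (r : ℝ) ^ 2 - (n : ℝ) * ((r : ℝ) - δ) > 0) :
    (C.card : ℝ) ≤ (n : ℝ) * δ / ((r : ℝ) ^ 2 - (n : ℝ) * ((r : ℝ) - δ)) := by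
  classical
  set M := C.card with hMdef
  rcases Nat.eq_zero_or_pos M with hM0 | hMpos
  · rw [hM0]; push_cast; positivity
  set k : Fin n → ℕ := fun i => (C.filter (fun x => x i = true)).card with hk
  set lam : (Fin n → Bool) → (Fin n → Bool) → ℕ :=
    fun x y => (univ.filter (fun i => x i = true ∧ y i = true)).card with hlam
  -- sum of k = M * r
  have hsum : ∑ i, k i = M * r := by
    have : ∑ i, k i = ∑ x ∈ C, (univ.filter (fun i => x i = true)).card := by
      simp only [hk, card_filter]
      rw [Finset.sum_comm]
    rw [this, Finset.sum_congr rfl (fun x hx => hw x hx), Finset.sum_const, smul_eq_mul]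
  -- sum of squares
  have hsq : ∑ i, (k i) ^ 2 = ∑ x ∈ C, ∑ y ∈ C, lam x y := by
    have h1 : ∀ i : Fin n, (k i) ^ 2 = ∑ x ∈ C, ∑ y ∈ C,
        (if x i = true then 1 else 0) * (if y i = true then 1 else 0) := by
      intro i
      rw [sq, hk]
      simp only [card_filter]
      rw [Finset.sum_mul_sum]
    simp only [h1, hlam]
    rw [Finset.sum_comm]
    refine Finset.sum_congr rfl fun x _ => ?_
    rw [Finset.sum_comm]
    refine Finset.sum_congr rfl fun y _ => ?_
    rw [card_filter]
    refine Finset.sum_congr rfl fun i _ => ?_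
    by_cases hx : x i = true <;> by_cases hy : y i = true <;> simp [hx, hy]
  -- diagonal
  have hdiag : ∀ x ∈ C, lam x x = r := by
    intro x hx
    rw [hlam]
    simp only [and_self]
    exact hw x hx
  -- off diagonal
  have hoff : ∀ x ∈ C, ∀ y ∈ C, x ≠ y → lam x y ≤ r - δ := by
    intro x hx y hy hxy
    set A := univ.filter (fun i => x i = true) with hA
    set B := univ.filter (fun i => y i = true) with hB
    have hlAB : lam x y = (A ∩ B).card := by
      rw [hlam, hA, hB, ← Finset.filter_and]
    have hAc : A.card = r := hw x hx
    have hBc : B.card = r := hw y hy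
    have hdisag : univ.filter (fun i => x i ≠ y i) = (A \ B) ∪ (B \ A) := by
      ext i
      simp only [mem_filter, mem_union, mem_sdiff, hA, hB, mem_univ, true_and]
      cases hxi : x i <;> cases hyi : y i <;> simp
    have h1 : (A \ B).card + (A ∩ B).card = A.card := Finset.card_sdiff_add_card_inter A B
    have h2 : (B \ A).card + (B ∩ A).card = B.card := Finset.card_sdiff_add_card_inter B A
    have hBA : (B ∩ A).card = (A ∩ B).card := by rw [Finset.inter_comm]
    have hdc : 2 * δ ≤ (univ.filter (fun i => x i ≠ y i)).card := hd x hx y hy hxy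
    rw [hdisag, Finset.card_union_of_disjoint disjoint_sdiff_sdiff] at hdc
    omega
  -- bound on sum of squares
  have hsqbound : ∑ i, (k i) ^ 2 ≤ M * r + M * (M - 1) * (r - δ) := by
    rw [hsq]
    have hx1 : ∀ x ∈ C, ∑ y ∈ C, lam x y ≤ r + (M - 1) * (r - δ) := by
      intro x hx
      rw [← Finset.sum_erase_add C _ hx, hdiag x hx, add_comm]
      gcongr r + ?_
      calc ∑ y ∈ C.erase x, lam x y ≤ ∑ y ∈ C.erase x, (r - δ) := by
            refine Finset.sum_le_sum fun y hy => ?_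
            exact hoff x hx y (Finset.mem_of_mem_erase hy)
              (fun h => (Finset.ne_of_mem_erase hy) h.symm)
        _ = (M - 1) * (r - δ) := by
            rw [Finset.sum_const, smul_eq_mul, Finset.card_erase_of_mem hx]
    calc ∑ x ∈ C, ∑ y ∈ C, lam x y ≤ ∑ x ∈ C, (r + (M - 1) * (r - δ)) :=
          Finset.sum_le_sum hx1
      _ = M * (r + (M - 1) * (r - δ)) := by rw [Finset.sum_const, smul_eq_mul]
      _ = M * r + M * (M - 1) * (r - δ) := by ring
  -- Cauchy-Schwarz over ℝ
  have hcs : ((M : ℝ) * r) ^ 2 ≤ (n : ℝ) * ∑ i, ((k i : ℝ)) ^ 2 := by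
    have := sq_sum_le_card_mul_sum_sq (s := (univ : Finset (Fin n)))
      (f := fun i => (k i : ℝ))
    simpa [hsum, ← Nat.cast_sum] using this
  have hsqR : ∑ i, ((k i : ℝ)) ^ 2 ≤ (M : ℝ) * r + (M : ℝ) * ((M : ℝ) - 1) * ((r : ℝ) - δ) := by
    have := hsqbound
    have hcast : ((∑ i, (k i) ^ 2 : ℕ) : ℝ) ≤ ((M * r + M * (M - 1) * (r - δ) : ℕ) : ℝ) := by
      exact_mod_cast this
    push_cast [Nat.cast_sub hrδ.le, Nat.cast_sub hMpos] at hcast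
    convert hcast using 2
  have key : ((M : ℝ) * r) ^ 2 ≤ (n : ℝ) * ((M : ℝ) * r + (M : ℝ) * ((M : ℝ) - 1) * ((r : ℝ) - δ)) := by
    calc ((M : ℝ) * r) ^ 2 ≤ (n : ℝ) * ∑ i, ((k i : ℝ)) ^ 2 := hcs
      _ ≤ _ := by
          apply mul_le_mul_of_nonneg_left hsqR (by positivity)
  -- final algebra
  have hMR : (1 : ℝ) ≤ (M : ℝ) := by exact_mod_cast hMpos
  rw [le_div_iff₀ hpos]
  have hMpos' : (0 : ℝ) < M := by linarith
  have h2 : (M : ℝ) * ((M : ℝ) * ((r : ℝ) ^ 2 - (n : ℝ) * ((r : ℝ) - δ)))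
      ≤ (M : ℝ) * ((n : ℝ) * δ) := by nlinarith [key]
  exact le_of_mul_le_mul_left h2 hMpos'
end

section
/- Let k and v be integers with 2 ≤ k < v. If there exists a pairwise balanced design on v points with b blocks in which some block has exactly k points, then b ≥ 1 + k²(v−k)/(v−1) (Stanton–Kalbfleisch Bound). -/
open Finset

private lemma nat_cast_mul_sub_self (m : ℕ) : ((m * m - m : ℕ) : ℝ) = (m : ℝ) ^ 2 - m := by
  have h : m ≤ m * m := by
    rcases Nat.eq_zero_or_pos m with h | h
    · simp [h]
    · exact Nat.le_mul_of_pos_left m h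
  rw [Nat.cast_sub h]
  push_cast
  ring

theorem stanton_kalbfleisch (v b k : ℕ) (hk : 2 ≤ k) (hkv : k < v)
    (A : Fin b → Finset (Fin v))
    (hsize : ∀ i, 2 ≤ (A i).card)
    (hpair : ∀ x y : Fin v, x ≠ y → ∃! i : Fin b, x ∈ A i ∧ y ∈ A i)
    (hblock : ∃ i, (A i).card = k) :
    (b : ℝ) ≥ 1 + (k : ℝ) ^ 2 * ((v : ℝ) - k) / ((v : ℝ) - 1) := by
  classical
  obtain ⟨i₀, hB⟩ := hblock
  set B : Finset (Fin v) := A i₀ with hBdef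
  set S : Finset (Fin b) := univ.filter (fun j => j ≠ i₀ ∧ (A j ∩ B).Nonempty) with hS
  -- every block in S meets B in exactly one point
  have hcap1 : ∀ j ∈ S, (A j ∩ B).card = 1 := by
    intro j hj
    rw [hS, mem_filter] at hj
    obtain ⟨-, hj0, hne⟩ := hj
    refine le_antisymm ?_ (card_pos.mpr hne)
    by_contra h
    push_neg at h
    obtain ⟨x, hx, y, hy, hxy⟩ := Finset.one_lt_card.mp h
    simp only [mem_inter] at hx hy
    obtain ⟨w, -, hu⟩ := hpair x y hxy
    exact hj0 ((hu j ⟨hx.1, hy.1⟩).trans (hu i₀ ⟨hx.2, hy.2⟩).symm)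
  -- every point outside B lies on exactly k blocks of S
  have hpoint : ∀ x : Fin v, x ∉ B → (S.filter (fun j => x ∈ A j)).card = k := by
    intro x hx
    rw [← hB]
    have hne : ∀ j ∈ S, (A j ∩ B).Nonempty := fun j hj =>
      card_pos.mp (by rw [hcap1 j hj]; norm_num)
    refine Finset.card_bij
      (fun j hj => (A j ∩ B).min' (hne j (mem_filter.mp hj).1)) ?_ ?_ ?_
    · intro j hj
      exact (mem_inter.mp (Finset.min'_mem (A j ∩ B) (hne j (mem_filter.mp hj).1))).2
    · intro j1 hj1 j2 hj2 heq
      have hy1 : (A j1 ∩ B).min' (hne j1 (mem_filter.mp hj1).1) ∈ A j1 ∩ B :=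
        Finset.min'_mem _ _
      have heq' : (A j1 ∩ B).min' (hne j1 (mem_filter.mp hj1).1)
          = (A j2 ∩ B).min' (hne j2 (mem_filter.mp hj2).1) := heq
      have hy2 : (A j1 ∩ B).min' (hne j1 (mem_filter.mp hj1).1) ∈ A j2 ∩ B := by
        rw [heq']; exact Finset.min'_mem _ _
      set y := (A j1 ∩ B).min' (hne j1 (mem_filter.mp hj1).1) with hy
      rw [mem_filter] at hj1 hj2
      have hxy : x ≠ y := fun h => hx (by rw [h]; exact (mem_inter.mp hy1).2)
      obtain ⟨w, -, hu⟩ := hpair x y hxy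
      exact (hu j1 ⟨hj1.2, (mem_inter.mp hy1).1⟩).trans (hu j2 ⟨hj2.2, (mem_inter.mp hy2).1⟩).symm
    · intro y hy
      have hxy : x ≠ y := fun h => hx (h ▸ hy)
      obtain ⟨j, ⟨hxj, hyj⟩, hu⟩ := hpair x y hxy
      have hjS : j ∈ S := by
        rw [hS, mem_filter]
        refine ⟨mem_univ _, fun h => hx (by rw [hBdef, ← h]; exact hxj), ⟨y, mem_inter.mpr ⟨hyj, hy⟩⟩⟩
      refine ⟨j, mem_filter.mpr ⟨hjS, hxj⟩, ?_⟩
      obtain ⟨a, ha⟩ := Finset.card_eq_one.mp (hcap1 j hjS)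
      have hya : y = a := by
        have := mem_inter.mpr ⟨hyj, hy⟩
        rw [ha, mem_singleton] at this
        exact this
      simp [ha, hya]
  -- double counting: sum of outside-parts = k * (v - k)
  have hdiff : ∀ j : Fin b, (A j \ B) = Bᶜ.filter (fun x => x ∈ A j) := by
    intro j; ext x; simp [mem_sdiff, mem_filter, mem_compl, and_comm]
  have hsum : ∑ j ∈ S, (A j \ B).card = k * (v - k) := by
    calc ∑ j ∈ S, (A j \ B).card
        = ∑ j ∈ S, ∑ x ∈ Bᶜ, if x ∈ A j then 1 else 0 := by
          refine sum_congr rfl fun j _ => ?_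
          rw [hdiff j, card_filter]
      _ = ∑ x ∈ Bᶜ, ∑ j ∈ S, if x ∈ A j then 1 else 0 := sum_comm
      _ = ∑ x ∈ Bᶜ, (S.filter (fun j => x ∈ A j)).card := by
          refine sum_congr rfl fun x _ => (card_filter _ _).symm
      _ = ∑ x ∈ Bᶜ, k := sum_congr rfl (fun x hx => hpoint x (by simpa using hx))
      _ = (v - k) * k := by
          rw [sum_const, card_compl, hB, Fintype.card_fin, smul_eq_mul]
      _ = k * (v - k) := mul_comm _ _
  -- pairs outside B are covered at most once
  have hdisj : ∀ j1 ∈ S, ∀ j2 ∈ S, j1 ≠ j2 →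
      Disjoint ((A j1 \ B).offDiag) ((A j2 \ B).offDiag) := by
    intro j1 _ j2 _ hne
    rw [Finset.disjoint_left]
    rintro ⟨x, y⟩ h1 h2
    rw [mem_offDiag] at h1 h2
    obtain ⟨hx1, hy1, hxy⟩ := h1
    obtain ⟨hx2, hy2, -⟩ := h2
    obtain ⟨w, -, hu⟩ := hpair x y hxy
    exact hne ((hu j1 ⟨(mem_sdiff.mp hx1).1, (mem_sdiff.mp hy1).1⟩).trans
      (hu j2 ⟨(mem_sdiff.mp hx2).1, (mem_sdiff.mp hy2).1⟩).symm)
  have hsub : S.biUnion (fun j => (A j \ B).offDiag) ⊆ Bᶜ.offDiag := by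
    intro p hp
    rw [mem_biUnion] at hp
    obtain ⟨j, -, hpj⟩ := hp
    rw [mem_offDiag] at hpj ⊢
    exact ⟨mem_compl.mpr (mem_sdiff.mp hpj.1).2, mem_compl.mpr (mem_sdiff.mp hpj.2.1).2, hpj.2.2⟩
  have hsq : ∑ j ∈ S, ((A j \ B).card * (A j \ B).card - (A j \ B).card)
      ≤ (v - k) * (v - k) - (v - k) := by
    calc ∑ j ∈ S, ((A j \ B).card * (A j \ B).card - (A j \ B).card)
        = ∑ j ∈ S, ((A j \ B).offDiag).card := by
          refine sum_congr rfl fun j _ => (Finset.offDiag_card _).symm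
      _ = (S.biUnion fun j => (A j \ B).offDiag).card := (card_biUnion hdisj).symm
      _ ≤ (Bᶜ.offDiag).card := card_le_card hsub
      _ = (v - k) * (v - k) - (v - k) := by
          rw [Finset.offDiag_card, card_compl, hB, Fintype.card_fin]
  -- S has at most b - 1 blocks
  have hScard : S.card + 1 ≤ b := by
    have hsub' : S ⊆ univ.erase i₀ := by
      intro j hj
      rw [hS, mem_filter] at hj
      exact mem_erase.mpr ⟨hj.2.1, mem_univ j⟩
    have h1 := card_le_card hsub'
    rw [card_erase_of_mem (mem_univ i₀), card_univ, Fintype.card_fin] at h1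
    have hb : 0 < b := i₀.pos
    omega
  -- pass to the reals
  have hk2 : (2 : ℝ) ≤ k := by exact_mod_cast hk
  have hvk : (k : ℝ) < v := by exact_mod_cast hkv
  set n : ℝ := (v : ℝ) - k with hn
  have hnpos : 0 < n := by simp only [hn]; linarith
  have hv1 : (0 : ℝ) < (v : ℝ) - 1 := by linarith
  have hnk : ((v - k : ℕ) : ℝ) = n := by
    rw [Nat.cast_sub hkv.le]
  have hsumR : ∑ j ∈ S, ((A j \ B).card : ℝ) = k * n := by
    have h := congrArg (Nat.cast : ℕ → ℝ) hsum
    rw [Nat.cast_sum, Nat.cast_mul, hnk] at h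
    exact h
  have hsqR : ∑ j ∈ S, (((A j \ B).card : ℝ) ^ 2 - ((A j \ B).card : ℝ)) ≤ n ^ 2 - n := by
    have h := (Nat.cast_le (α := ℝ)).mpr hsq
    rw [Nat.cast_sum] at h
    simp only [nat_cast_mul_sub_self] at h
    rw [hnk] at h
    exact h
  have hsq2 : ∑ j ∈ S, ((A j \ B).card : ℝ) ^ 2 ≤ n ^ 2 - n + k * n := by
    rw [Finset.sum_sub_distrib, hsumR] at hsqR
    linarith
  have hcs : (∑ j ∈ S, ((A j \ B).card : ℝ)) ^ 2
      ≤ (S.card : ℝ) * ∑ j ∈ S, ((A j \ B).card : ℝ) ^ 2 :=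
    sq_sum_le_card_mul_sum_sq
  rw [hsumR] at hcs
  have hm : (S.card : ℝ) + 1 ≤ b := by exact_mod_cast hScard
  have hmain : (k : ℝ) ^ 2 * n ≤ (S.card : ℝ) * ((v : ℝ) - 1) := by
    have h1 : (k : ℝ) ^ 2 * n * n ≤ (S.card : ℝ) * ((v : ℝ) - 1) * n := by
      have h2 : (S.card : ℝ) * (n ^ 2 - n + k * n) = (S.card : ℝ) * ((v : ℝ) - 1) * n := by
        simp only [hn]; ring
      calc (k : ℝ) ^ 2 * n * n = (k * n) ^ 2 := by ring
        _ ≤ (S.card : ℝ) * ∑ j ∈ S, ((A j \ B).card : ℝ) ^ 2 := hcs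
        _ ≤ (S.card : ℝ) * (n ^ 2 - n + k * n) := by
            have : (0 : ℝ) ≤ (S.card : ℝ) := Nat.cast_nonneg _
            nlinarith
        _ = (S.card : ℝ) * ((v : ℝ) - 1) * n := h2
    exact le_of_mul_le_mul_right h1 hnpos
  have hdiv : (k : ℝ) ^ 2 * ((v : ℝ) - k) / ((v : ℝ) - 1) ≤ (S.card : ℝ) := by
    rw [div_le_iff₀ hv1]
    exact hmain
  linarith
end

section
/- In any (r,λ)-design on v points with b blocks, b ≥ r²v/(r + λ(v−1)) (Mullin–Vanstone Bound). -/
open Finset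

theorem mullin_vanstone (v b r lam : ℕ)
    (A : Fin b → Finset (Fin v))
    (hne : ∀ i, (A i).Nonempty)
    (hr : ∀ x : Fin v, (Finset.univ.filter (fun i => x ∈ A i)).card = r)
    (hlam : ∀ x y : Fin v, x ≠ y →
      (Finset.univ.filter (fun i => x ∈ A i ∧ y ∈ A i)).card = lam) :
    (b : ℝ) ≥ (r : ℝ) ^ 2 * (v : ℝ) / ((r : ℝ) + (lam : ℝ) * ((v : ℝ) - 1)) := by
  classical
  rcases Nat.eq_zero_or_pos v with hv | hv
  · subst hv; simp
  have hcard : ∀ i, (A i).card = ∑ x : Fin v, if x ∈ A i then 1 else 0 := by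
    intro i
    rw [← Finset.card_filter]
    congr 1
    ext x; simp
  have S1 : ∑ i : Fin b, (A i).card = v * r := by
    calc ∑ i : Fin b, (A i).card
        = ∑ i : Fin b, ∑ x : Fin v, if x ∈ A i then 1 else 0 := by
          simp_rw [hcard]
      _ = ∑ x : Fin v, ∑ i : Fin b, if x ∈ A i then 1 else 0 := Finset.sum_comm
      _ = ∑ x : Fin v, r := by
          refine Finset.sum_congr rfl fun x _ => ?_
          rw [← hr x, Finset.card_filter]
      _ = v * r := by simp [mul_comm]
  have S2 : ∑ i : Fin b, (A i).card ^ 2 = v * (r + (v - 1) * lam) := by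
    calc ∑ i : Fin b, (A i).card ^ 2
        = ∑ i : Fin b, ∑ x : Fin v, ∑ y : Fin v,
            if x ∈ A i ∧ y ∈ A i then 1 else 0 := by
          refine Finset.sum_congr rfl fun i _ => ?_
          rw [hcard, sq, Finset.sum_mul_sum]
          refine Finset.sum_congr rfl fun x _ => Finset.sum_congr rfl fun y _ => ?_
          by_cases hx : x ∈ A i <;> by_cases hy : y ∈ A i <;> simp [hx, hy]
      _ = ∑ x : Fin v, ∑ y : Fin v, ∑ i : Fin b,
            if x ∈ A i ∧ y ∈ A i then 1 else 0 := by
          rw [Finset.sum_comm]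
          exact Finset.sum_congr rfl fun x _ => Finset.sum_comm
      _ = ∑ x : Fin v, (r + (v - 1) * lam) := by
          refine Finset.sum_congr rfl fun x _ => ?_
          have : ∀ y : Fin v, (∑ i : Fin b, if x ∈ A i ∧ y ∈ A i then 1 else 0)
              = if y = x then r else lam := by
            intro y
            rw [← Finset.card_filter]
            by_cases h : y = x
            · subst h; rw [if_pos rfl]; simpa [and_self] using hr y
            · rw [if_neg h]; exact hlam x y (fun hxy => h hxy.symm)
          simp_rw [this]
          rw [← Finset.add_sum_erase _ (fun y => if y = x then r else lam)
            (Finset.mem_univ x), if_pos rfl]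
          congr 1
          rw [Finset.sum_congr rfl (fun y hy => if_neg (Finset.ne_of_mem_erase hy))]
          simp [Finset.card_erase_of_mem, mul_comm]
      _ = v * (r + (v - 1) * lam) := by simp [mul_comm]
  -- move to ℝ
  set D : ℝ := (r : ℝ) + (lam : ℝ) * ((v : ℝ) - 1) with hD
  have hv1 : (1 : ℝ) ≤ (v : ℝ) := by exact_mod_cast hv
  have hDnn : 0 ≤ D := by
    have h1 : (0:ℝ) ≤ (lam:ℝ) * ((v:ℝ) - 1) :=
      mul_nonneg (by positivity) (by linarith)
    have h2 : (0:ℝ) ≤ (r:ℝ) := by positivity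
    rw [hD]; linarith
  rcases eq_or_lt_of_le hDnn with hD0 | hDpos
  · rw [← hD0, div_zero]; positivity
  have CS : ((∑ i : Fin b, ((A i).card : ℝ)) ^ 2)
      ≤ (b : ℝ) * ∑ i : Fin b, ((A i).card : ℝ) ^ 2 := by
    simpa using sq_sum_le_card_mul_sum_sq (s := (Finset.univ : Finset (Fin b)))
      (f := fun i => ((A i).card : ℝ))
  have e1 : (∑ i : Fin b, ((A i).card : ℝ)) = (v : ℝ) * r := by
    exact_mod_cast congrArg (Nat.cast : ℕ → ℝ) S1
  have e2 : (∑ i : Fin b, ((A i).card : ℝ) ^ 2) = (v : ℝ) * D := by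
    have := congrArg (Nat.cast : ℕ → ℝ) S2
    push_cast [Nat.cast_sub hv] at this
    rw [hD]; linarith [this]
  rw [e1, e2] at CS
  rw [ge_iff_le, div_le_iff₀ hDpos]
  have hvpos : (0:ℝ) < v := by linarith
  nlinarith [CS]
end

section
/- If a projective plane of order q contains a set of s points and t lines with no incidence between them, then t ≤ (q³ + q² + q − qs)/(q + s). -/
theorem nonincident_bound (q s t : ℕ) (hq : 2 ≤ q)
    (L : Fin (q ^ 2 + q + 1) → Finset (Fin (q ^ 2 + q + 1)))
    (hline : ∀ i, (L i).card = q + 1)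
    (hpoint : ∀ x : Fin (q ^ 2 + q + 1),
      (Finset.univ.filter (fun i => x ∈ L i)).card = q + 1)
    (hpair : ∀ x y : Fin (q ^ 2 + q + 1), x ≠ y → ∃! i, x ∈ L i ∧ y ∈ L i)
    (P : Finset (Fin (q ^ 2 + q + 1))) (T : Finset (Fin (q ^ 2 + q + 1)))
    (hP : P.card = s) (hT : T.card = t)
    (hnonin : ∀ p ∈ P, ∀ i ∈ T, p ∉ L i) :
    (t : ℝ) ≤ ((q : ℝ) ^ 3 + (q : ℝ) ^ 2 + q - q * s) / ((q : ℝ) + s) := by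
  classical
  set d : Fin (q ^ 2 + q + 1) → ℕ := fun x => (T.filter (fun i => x ∈ L i)).card with hd
  -- total incidence count
  have hsum : ∑ x, d x = t * (q + 1) := by
    have : ∑ x, d x = ∑ i ∈ T, (L i).card := by
      simp only [hd, Finset.card_filter]
      rw [Finset.sum_comm]
      congr 1
      funext i
      simp [Finset.sum_ite_mem]
    rw [this]
    simp [hline, Finset.sum_const, hT, mul_comm]
  -- intersections of two distinct lines have at most one point
  have hinter : ∀ i j, i ≠ j → (L i ∩ L j).card ≤ 1 := by
    intro i j hij
    refine Finset.card_le_one.mpr ?_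
    intro a ha b hb
    by_contra hab
    simp only [Finset.mem_inter] at ha hb
    obtain ⟨k, -, hk⟩ := hpair a b hab
    exact hij ((hk i ⟨ha.1, hb.1⟩).trans (hk j ⟨ha.2, hb.2⟩).symm)
  -- sum of squares bound
  have hsumsq : ∑ x, (d x) ^ 2 ≤ t * (t + q) := by
    have key : ∑ x, (d x) ^ 2 = ∑ i ∈ T, ∑ j ∈ T, (L i ∩ L j).card := by
      simp only [hd, sq, Finset.card_filter, Finset.sum_mul_sum]
      rw [Finset.sum_comm]
      congr 1
      funext i
      rw [Finset.sum_comm]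
      congr 1
      funext j
      have : (L i ∩ L j).card = ∑ x, if x ∈ L i ∧ x ∈ L j then 1 else 0 := by
        rw [← Finset.card_filter]
        congr 1
        ext x
        simp [Finset.mem_inter]
      rw [this]
      congr 1
      funext x
      by_cases h1 : x ∈ L i <;> by_cases h2 : x ∈ L j <;> simp [h1, h2]
    rw [key]
    have hrow : ∀ i ∈ T, ∑ j ∈ T, (L i ∩ L j).card ≤ t + q := by
      intro i hi
      have hle : ∑ j ∈ T, (L i ∩ L j).card ≤ ∑ j ∈ T, (1 + if j = i then q else 0) := by
        refine Finset.sum_le_sum ?_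
        intro j hj
        by_cases hji : j = i
        · subst hji
          simp [Finset.inter_self, hline, Nat.add_comm]
        · simpa [hji] using hinter i j (Ne.symm hji)
      refine hle.trans ?_
      rw [Finset.sum_add_distrib, Finset.sum_ite_eq' T i (fun _ => q)]
      simp [hi, hT]
    calc ∑ i ∈ T, ∑ j ∈ T, (L i ∩ L j).card ≤ ∑ i ∈ T, (t + q) :=
          Finset.sum_le_sum hrow
      _ = t * (t + q) := by simp [hT, mul_comm]
  -- d vanishes on P
  have hsupp : ∀ x ∈ P, d x = 0 := by
    intro x hx
    simp only [hd, Finset.card_eq_zero, Finset.filter_eq_empty_iff]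
    exact fun i hi => hnonin x hx i hi
  have hs_le : s ≤ q ^ 2 + q + 1 := by
    rw [← hP]
    simpa using Finset.card_le_card (Finset.subset_univ P)
  -- restrict sums to Pᶜ
  have hsum' : ∑ x ∈ Pᶜ, d x = t * (q + 1) := by
    rw [← hsum]
    apply Finset.sum_subset (Finset.subset_univ Pᶜ)
    intro x _ hx
    exact hsupp x (by simpa using hx)
  have hsumsq' : ∑ x ∈ Pᶜ, (d x) ^ 2 ≤ t * (t + q) := by
    refine le_trans (Finset.sum_le_sum_of_subset (Finset.subset_univ _)) hsumsq
  have hcard : (Pᶜ : Finset (Fin (q ^ 2 + q + 1))).card = q ^ 2 + q + 1 - s := by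
    simp [Finset.card_compl, hP]
  -- Cauchy-Schwarz over ℝ
  have hcs : ((∑ x ∈ Pᶜ, d x : ℕ) : ℝ) ^ 2 ≤
      ((Pᶜ.card : ℕ) : ℝ) * ((∑ x ∈ Pᶜ, (d x) ^ 2 : ℕ) : ℝ) := by
    push_cast
    exact sq_sum_le_card_mul_sum_sq
  rw [hsum', hcard] at hcs
  have hmain : ((t : ℝ) * (q + 1)) ^ 2 ≤ ((q : ℝ) ^ 2 + q + 1 - s) * (t * (t + q)) := by
    have h1 : ((q ^ 2 + q + 1 - s : ℕ) : ℝ) = (q : ℝ) ^ 2 + q + 1 - s := by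
      rw [Nat.cast_sub hs_le]; push_cast; ring
    have h2 : ((∑ x ∈ Pᶜ, (d x) ^ 2 : ℕ) : ℝ) ≤ (t : ℝ) * (t + q) := by
      exact_mod_cast Nat.cast_le.mpr hsumsq'
    calc ((t : ℝ) * (q + 1)) ^ 2 = ((t * (q + 1) : ℕ) : ℝ) ^ 2 := by push_cast; ring
      _ ≤ ((q ^ 2 + q + 1 - s : ℕ) : ℝ) * ((∑ x ∈ Pᶜ, (d x) ^ 2 : ℕ) : ℝ) := hcs
      _ ≤ ((q : ℝ) ^ 2 + q + 1 - s) * (t * (t + q)) := by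
          rw [h1]
          refine mul_le_mul_of_nonneg_left h2 ?_
          have : (s : ℝ) ≤ (q : ℝ) ^ 2 + q + 1 := by exact_mod_cast hs_le
          linarith
  have hqs : (0 : ℝ) < (q : ℝ) + s := by
    have : (2 : ℝ) ≤ q := by exact_mod_cast hq
    positivity
  rw [le_div_iff₀ hqs]
  rcases Nat.eq_zero_or_pos t with ht0 | htpos
  · subst ht0
    have hsq : (s : ℝ) ≤ (q : ℝ) ^ 2 + q + 1 := by exact_mod_cast hs_le
    have hq' : (2 : ℝ) ≤ q := by exact_mod_cast hq
    push_cast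
    nlinarith
  · have ht' : (1 : ℝ) ≤ t := by exact_mod_cast htpos
    nlinarith [hmain, mul_pos (lt_of_lt_of_le zero_lt_one ht') hqs]
end

section
/- If in a projective plane of order q there exist s points and s lines that are pairwise nonincident (i.e., t = s in the previous bound), then s ≤ 1 + (q+1)(√q − 1). -/
open Finset

theorem nonincident_square_bound (q s : ℕ) (hq : 2 ≤ q)
    (L : Fin (q ^ 2 + q + 1) → Finset (Fin (q ^ 2 + q + 1)))
    (hline : ∀ i, (L i).card = q + 1)
    (hpoint : ∀ x : Fin (q ^ 2 + q + 1),
      (Finset.univ.filter (fun i => x ∈ L i)).card = q + 1)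
    (hpair : ∀ x y : Fin (q ^ 2 + q + 1), x ≠ y → ∃! i, x ∈ L i ∧ y ∈ L i)
    (P : Finset (Fin (q ^ 2 + q + 1))) (T : Finset (Fin (q ^ 2 + q + 1)))
    (hP : P.card = s) (hT : T.card = s)
    (hnonin : ∀ p ∈ P, ∀ i ∈ T, p ∉ L i) :
    (s : ℝ) ≤ 1 + ((q : ℝ) + 1) * (Real.sqrt q - 1) := by
  classical
  have hq1 : (1 : ℝ) ≤ Real.sqrt q := by
    rw [show (1:ℝ) = Real.sqrt 1 by simp]
    apply Real.sqrt_le_sqrt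
    exact_mod_cast Nat.one_le_of_lt hq
  rcases Nat.eq_zero_or_pos s with hs0 | hs1
  · subst hs0
    push_cast
    nlinarith [Real.sqrt_nonneg (q:ℝ)]
  -- two points determine at most one line
  have huniq : ∀ i j : Fin (q ^ 2 + q + 1), ∀ x y : Fin (q ^ 2 + q + 1), x ≠ y →
      x ∈ L i → y ∈ L i → x ∈ L j → y ∈ L j → i = j := by
    intro i j x y hxy hxi hyi hxj hyj
    obtain ⟨k, -, hk⟩ := hpair x y hxy
    rw [hk i ⟨hxi, hyi⟩, hk j ⟨hxj, hyj⟩]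
  -- distinct lines meet in at most one point
  have hmeet1 : ∀ i j : Fin (q ^ 2 + q + 1), i ≠ j → ∀ x y : Fin (q ^ 2 + q + 1),
      x ∈ L i → x ∈ L j → y ∈ L i → y ∈ L j → x = y := by
    intro i j hij x y hxi hxj hyi hyj
    by_contra hxy
    exact hij (huniq i j x y hxy hxi hyi hxj hyj)
  -- distinct lines meet
  have hexists : ∀ i j : Fin (q ^ 2 + q + 1), i ≠ j → ∃ x, x ∈ L i ∧ x ∈ L j := by
    intro i j hij
    have h1 : (L i ∩ L j).card ≤ 1 := by
      rw [Finset.card_le_one]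
      intro a ha b hb
      simp only [Finset.mem_inter] at ha hb
      exact hmeet1 i j hij a b ha.1 ha.2 hb.1 hb.2
    have h2 : ¬ (L i ⊆ L j) := by
      intro hsub
      have : L i ∩ L j = L i := Finset.inter_eq_left.mpr hsub
      rw [this, hline i] at h1
      omega
    obtain ⟨p, hpi, hpj⟩ := Finset.not_subset.mp h2
    set f : Fin (q ^ 2 + q + 1) → Fin (q ^ 2 + q + 1) :=
      fun y => if h : p ≠ y then (hpair p y h).exists.choose else i with hf
    have hfmem : ∀ y ∈ L j, p ∈ L (f y) ∧ y ∈ L (f y) := by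
      intro y hy
      have hpy : p ≠ y := fun h => hpj (h ▸ hy)
      simp only [hf, dif_pos hpy]
      exact (hpair p y hpy).exists.choose_spec
    have hinj : Set.InjOn f (L j) := by
      intro y hy y' hy' hff
      by_contra hne
      have h1' := hfmem y hy
      have h2' := hfmem y' hy'
      rw [hff] at h1'
      have hfj : f y' = j := huniq (f y') j y y' hne h1'.2 h2'.2 hy hy'
      exact hpj (hfj ▸ h2'.1)
    have himg : (L j).image f ⊆ Finset.univ.filter (fun k => p ∈ L k) := by
      intro k hk
      obtain ⟨y, hy, rfl⟩ := Finset.mem_image.mp hk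
      simp [(hfmem y hy).1]
    have hcardimg : ((L j).image f).card = q + 1 := by
      rw [Finset.card_image_of_injOn hinj, hline j]
    have heq : (L j).image f = Finset.univ.filter (fun k => p ∈ L k) := by
      apply Finset.eq_of_subset_of_card_le himg
      rw [hcardimg, hpoint p]
    have hi : i ∈ (L j).image f := by
      rw [heq]; simp [hpi]
    obtain ⟨y, hy, hfy⟩ := Finset.mem_image.mp hi
    exact ⟨y, hfy ▸ (hfmem y hy).2, hy⟩
  have hcard1 : ∀ i j : Fin (q ^ 2 + q + 1), i ≠ j → (L i ∩ L j).card = 1 := by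
    intro i j hij
    obtain ⟨x, hxi, hxj⟩ := hexists i j hij
    rw [Finset.card_eq_one]
    refine ⟨x, Finset.eq_singleton_iff_unique_mem.mpr
      ⟨Finset.mem_inter.mpr ⟨hxi, hxj⟩, fun y hy => ?_⟩⟩
    exact hmeet1 i j hij y x (Finset.mem_inter.mp hy).1 (Finset.mem_inter.mp hy).2 hxi hxj
  -- degree of a point with respect to T
  set d : Fin (q ^ 2 + q + 1) → ℕ := fun x => (T.filter (fun i => x ∈ L i)).card with hd
  have hd0 : ∀ p ∈ P, d p = 0 := by
    intro p hp
    simp only [hd, Finset.card_eq_zero, Finset.filter_eq_empty_iff]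
    exact fun i hi => hnonin p hp i hi
  have hdind : ∀ x, d x = ∑ i ∈ T, if x ∈ L i then 1 else 0 := by
    intro x
    simp only [hd]
    rw [Finset.card_filter]
  have hsum1 : ∑ x, d x = s * (q + 1) := by
    simp_rw [hdind]
    rw [Finset.sum_comm]
    have hrow : ∀ i : Fin (q ^ 2 + q + 1),
        ∑ x : Fin (q ^ 2 + q + 1), (if x ∈ L i then 1 else 0) = q + 1 := by
      intro i
      rw [Finset.sum_ite_mem, Finset.univ_inter, Finset.sum_const, hline i, smul_eq_mul, mul_one]
    rw [Finset.sum_congr rfl (fun i _ => hrow i), Finset.sum_const, hT, smul_eq_mul]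
  have hsum2 : ∑ x, d x * d x = s * (q + s) := by
    have hexp : ∀ x, d x * d x =
        ∑ i ∈ T, ∑ j ∈ T, (if x ∈ L i ∧ x ∈ L j then 1 else 0) := by
      intro x
      rw [hdind, Finset.sum_mul_sum]
      refine Finset.sum_congr rfl fun i _ => Finset.sum_congr rfl fun j _ => ?_
      by_cases h1 : x ∈ L i <;> by_cases h2 : x ∈ L j <;> simp [h1, h2]
    simp_rw [hexp]
    rw [Finset.sum_comm]
    have hswap : ∀ i ∈ T,
        (∑ x : Fin (q ^ 2 + q + 1), ∑ j ∈ T, (if x ∈ L i ∧ x ∈ L j then 1 else 0))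
          = q + s := by
      intro i hiT
      rw [Finset.sum_comm]
      have hcell : ∀ j : Fin (q ^ 2 + q + 1),
          (∑ x : Fin (q ^ 2 + q + 1), (if x ∈ L i ∧ x ∈ L j then 1 else 0))
            = (L i ∩ L j).card := by
        intro j
        simp_rw [← Finset.mem_inter]
        rw [Finset.sum_ite_mem, Finset.univ_inter, Finset.sum_const, smul_eq_mul, mul_one]
      rw [Finset.sum_congr rfl (fun j _ => hcell j)]
      rw [← Finset.add_sum_erase _ _ hiT, Finset.inter_self, hline i]
      have : ∀ j ∈ T.erase i, (L i ∩ L j).card = 1 := by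
        intro j hj
        exact hcard1 i j (Ne.symm (Finset.ne_of_mem_erase hj))
      rw [Finset.sum_congr rfl this, Finset.sum_const, smul_eq_mul, mul_one,
        Finset.card_erase_of_mem hiT, hT]
      omega
    rw [Finset.sum_congr rfl hswap, Finset.sum_const, hT, smul_eq_mul]
  -- Cauchy-Schwarz on the complement of P
  have hPN : P ⊆ Finset.univ := Finset.subset_univ P
  have hcompl : Pᶜ.card = q ^ 2 + q + 1 - s := by
    rw [Finset.card_compl, hP, Fintype.card_fin]
  have hsumc1 : ∑ x ∈ Pᶜ, (d x : ℝ) = (s : ℝ) * (q + 1) := by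
    have : ∑ x ∈ Pᶜ, (d x : ℝ) = ∑ x, (d x : ℝ) := by
      rw [← Finset.sum_compl_add_sum P]
      have : ∑ x ∈ P, (d x : ℝ) = 0 :=
        Finset.sum_eq_zero fun p hp => by rw [hd0 p hp]; simp
      rw [this, add_zero]
    rw [this, ← Nat.cast_sum, hsum1]
    push_cast; ring
  have hsumc2 : ∑ x ∈ Pᶜ, (d x : ℝ) ^ 2 = (s : ℝ) * (q + s) := by
    have h1 : ∑ x ∈ Pᶜ, (d x : ℝ) ^ 2 = ∑ x, (d x : ℝ) ^ 2 := by
      rw [← Finset.sum_compl_add_sum P]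
      have : ∑ x ∈ P, (d x : ℝ) ^ 2 = 0 :=
        Finset.sum_eq_zero fun p hp => by rw [hd0 p hp]; simp
      rw [this, add_zero]
    have h2 : ∑ x, (d x : ℝ) ^ 2 = ((∑ x, d x * d x : ℕ) : ℝ) := by
      rw [Nat.cast_sum]
      exact Finset.sum_congr rfl fun x _ => by push_cast; ring
    rw [h1, h2, hsum2]
    push_cast; ring
  have hCS := sq_sum_le_card_mul_sum_sq (s := Pᶜ) (f := fun x => (d x : ℝ))
  rw [hsumc1, hsumc2, hcompl] at hCS
  have hsN : s ≤ q ^ 2 + q + 1 := by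
    rw [← hT]
    simpa using Finset.card_le_card (Finset.subset_univ T)
  have hcast : ((q ^ 2 + q + 1 - s : ℕ) : ℝ) = (q : ℝ) ^ 2 + q + 1 - s := by
    push_cast [Nat.cast_sub hsN]; ring
  rw [hcast] at hCS
  -- algebra
  set a : ℝ := (s : ℝ) with ha
  set Q : ℝ := (q : ℝ) with hQ
  have hapos : (0 : ℝ) < a := by rw [ha]; exact_mod_cast hs1
  have hQ2 : (2 : ℝ) ≤ Q := by rw [hQ]; exact_mod_cast hq
  have key : a * ((a + Q) ^ 2) ≤ a * (Q * (Q + 1) ^ 2) := by nlinarith [hCS]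
  have key2 : (a + Q) ^ 2 ≤ Q * (Q + 1) ^ 2 := le_of_mul_le_mul_left key hapos
  have hsq : a + Q ≤ Real.sqrt Q * (Q + 1) := by
    have h0 : 0 ≤ a + Q := by linarith
    have := Real.sqrt_le_sqrt key2
    rw [Real.sqrt_sq h0] at this
    rw [Real.sqrt_mul (by linarith : (0:ℝ) ≤ Q), Real.sqrt_sq (by linarith : (0:ℝ) ≤ Q + 1)]
      at this
    exact this
  nlinarith [hsq]
end

section
/- Let k and v be integers with 2 ≤ k < v, and suppose there is a PBD on v points with b blocks containing a block of size exactly k. Then for every positive integer ℓ, b ≥ 1 + (2ℓk − v + k + 1)(v−k)/(ℓ² + ℓ) (Stinson Bound). -/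
set_option maxHeartbeats 1000000 in
theorem stinson_bound (v b k : ℕ) (hk : 2 ≤ k) (hkv : k < v)
    (A : Fin b → Finset (Fin v))
    (hsize : ∀ i, 2 ≤ (A i).card)
    (hpair : ∀ x y : Fin v, x ≠ y → ∃! i : Fin b, x ∈ A i ∧ y ∈ A i)
    (hblock : ∃ i, (A i).card = k) :
    ∀ ℓ : ℕ, 1 ≤ ℓ →
      (b : ℝ) ≥ 1 + (2 * (ℓ : ℝ) * k - v + k + 1) * ((v : ℝ) - k)
        / ((ℓ : ℝ) ^ 2 + ℓ) := by
  classical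
  intro ℓ hℓ
  obtain ⟨i₀, hB⟩ := hblock
  set B : Finset (Fin v) := A i₀ with hBdef
  set X : Finset (Fin v) := Bᶜ with hXdef
  have hn : X.card = v - k := by
    rw [hXdef, Finset.card_compl, hB]
    simp
  set t : Finset (Fin b) := Finset.univ.erase i₀ with htdef
  have hct : t.card = b - 1 := by
    rw [htdef, Finset.card_erase_of_mem (Finset.mem_univ _), Finset.card_univ,
      Fintype.card_fin]
  have hbpos : 1 ≤ b := Nat.one_le_iff_ne_zero.mpr (by rintro rfl; exact i₀.elim0)
  -- block map
  set f : Fin v × Fin v → Fin b := fun p =>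
    if h : p.1 ≠ p.2 then (hpair p.1 p.2 h).exists.choose else i₀ with hfdef
  have hfmem : ∀ p : Fin v × Fin v, p.1 ≠ p.2 → p.1 ∈ A (f p) ∧ p.2 ∈ A (f p) := by
    intro p h
    simp only [hfdef, dif_pos h]
    exact (hpair p.1 p.2 h).exists.choose_spec
  have hfeq : ∀ (p : Fin v × Fin v) (h : p.1 ≠ p.2) (i : Fin b),
      p.1 ∈ A i → p.2 ∈ A i → f p = i := by
    intro p h i h1 h2
    simp only [hfdef, dif_pos h]
    exact (hpair p.1 p.2 h).unique (hpair p.1 p.2 h).exists.choose_spec ⟨h1, h2⟩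
  have huniq : ∀ i, i ≠ i₀ → (A i ∩ B).card ≤ 1 := by
    intro i hi
    by_contra hcon
    push_neg at hcon
    obtain ⟨x, hx, y, hy, hxy⟩ := Finset.one_lt_card.mp hcon
    simp only [Finset.mem_inter] at hx hy
    exact hi ((hpair x y hxy).unique ⟨hx.1, hy.1⟩ ⟨hx.2, hy.2⟩)
  have key1 : X.offDiag.card = ∑ i ∈ t, ((A i ∩ X).offDiag).card := by
    have H : ∀ p ∈ X.offDiag, f p ∈ t := by
      intro p hp
      rw [Finset.mem_offDiag] at hp
      obtain ⟨h1, h2, h3⟩ := hp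
      refine Finset.mem_erase.mpr ⟨?_, Finset.mem_univ _⟩
      intro h
      have := (hfmem p h3).1
      rw [h] at this
      exact (Finset.mem_compl.mp h1) this
    rw [Finset.card_eq_sum_card_fiberwise H]
    refine Finset.sum_congr rfl fun i hi => ?_
    congr 1
    ext p
    simp only [Finset.mem_filter, Finset.mem_offDiag, Finset.mem_inter]
    constructor
    · rintro ⟨⟨h1, h2, h3⟩, rfl⟩
      obtain ⟨ha, hb2⟩ := hfmem p h3
      exact ⟨⟨ha, h1⟩, ⟨hb2, h2⟩, h3⟩
    · rintro ⟨⟨ha, h1⟩, ⟨hb2, h2⟩, h3⟩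
      exact ⟨⟨h1, h2, h3⟩, hfeq p h3 i ha hb2⟩
  have key2 : (B ×ˢ X).card = ∑ i ∈ t, ((A i ∩ B) ×ˢ (A i ∩ X)).card := by
    have hne : ∀ p : Fin v × Fin v, p.1 ∈ B → p.2 ∈ X → p.1 ≠ p.2 := by
      intro p h1 h2 h
      exact (Finset.mem_compl.mp h2) (h ▸ h1)
    have H : ∀ p ∈ B ×ˢ X, f p ∈ t := by
      intro p hp
      rw [Finset.mem_product] at hp
      refine Finset.mem_erase.mpr ⟨?_, Finset.mem_univ _⟩
      intro h
      have := (hfmem p (hne p hp.1 hp.2)).2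
      rw [h] at this
      exact (Finset.mem_compl.mp hp.2) this
    rw [Finset.card_eq_sum_card_fiberwise H]
    refine Finset.sum_congr rfl fun i hi => ?_
    congr 1
    ext p
    simp only [Finset.mem_filter, Finset.mem_product, Finset.mem_inter]
    constructor
    · rintro ⟨⟨h1, h2⟩, rfl⟩
      obtain ⟨ha, hb2⟩ := hfmem p (hne p h1 h2)
      exact ⟨⟨ha, h1⟩, ⟨hb2, h2⟩⟩
    · rintro ⟨⟨ha, h1⟩, ⟨hb2, h2⟩⟩
      exact ⟨⟨h1, h2⟩, hfeq p (hne p h1 h2) i ha hb2⟩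
  -- per-block inequality in ℤ
  have keyZ : ∀ i ∈ t,
      2 * (ℓ : ℤ) * (((A i ∩ B) ×ˢ (A i ∩ X)).card : ℤ)
        ≤ (ℓ : ℤ) ^ 2 + ℓ + (((A i ∩ X).offDiag).card : ℤ) := by
    intro i hi
    rw [Finset.card_product, Finset.offDiag_card]
    set e : ℕ := (A i ∩ B).card with hedef
    set m : ℕ := (A i ∩ X).card with hmdef
    have he : e ≤ 1 := huniq i (Finset.mem_erase.mp hi).1
    have hmm : m ≤ m * m := by
      rcases Nat.eq_zero_or_pos m with h | h
      · simp [h]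
      · exact Nat.le_mul_of_pos_left m h
    rw [Nat.cast_sub hmm]
    push_cast
    have hm2 : (m : ℤ) ≤ (m : ℤ) * m := by exact_mod_cast hmm
    interval_cases e
    · have h1 : (0:ℤ) ≤ (ℓ:ℤ)^2 + ℓ := by positivity
      push_cast
      linarith [hm2]
    · push_cast
      rcases le_or_gt (m : ℤ) (ℓ : ℤ) with h | h
      · have key : (0:ℤ) ≤ ((ℓ:ℤ) - m) * ((ℓ:ℤ) - m + 1) :=
          mul_nonneg (by linarith) (by linarith)
        have keyexp : ((ℓ:ℤ) - m) * ((ℓ:ℤ) - m + 1)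
            = (ℓ:ℤ)^2 + ℓ + ((m:ℤ)*m - m) - 2*(ℓ:ℤ)*(1*m) := by ring
        linarith [key, keyexp]
      · have h2 : (ℓ:ℤ) + 1 ≤ m := h
        have key : (0:ℤ) ≤ ((m:ℤ) - ℓ) * ((m:ℤ) - ℓ - 1) :=
          mul_nonneg (by linarith) (by linarith)
        have keyexp : ((m:ℤ) - ℓ) * ((m:ℤ) - ℓ - 1)
            = (ℓ:ℤ)^2 + ℓ + ((m:ℤ)*m - m) - 2*(ℓ:ℤ)*(1*m) := by ring
        linarith [key, keyexp]
  have hsum := Finset.sum_le_sum keyZ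
  rw [← Finset.mul_sum] at hsum
  rw [Finset.sum_add_distrib] at hsum
  have hc1 : ∑ i ∈ t, (((A i ∩ B) ×ˢ (A i ∩ X)).card : ℤ) = ((B ×ˢ X).card : ℤ) := by
    rw [key2]; push_cast; ring
  have hc2 : ∑ i ∈ t, (((A i ∩ X).offDiag).card : ℤ) = (X.offDiag.card : ℤ) := by
    rw [key1]; push_cast; ring
  rw [hc1, hc2, Finset.sum_const, hct] at hsum
  -- clean up cardinalities
  have hcard1 : ((B ×ˢ X).card : ℤ) = (k : ℤ) * ((v : ℤ) - k) := by
    rw [Finset.card_product, hB, hn]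
    push_cast [Nat.cast_sub hkv.le]
    ring
  have hcard2 : ((X.offDiag.card : ℕ) : ℤ)
      = ((v:ℤ) - k) * ((v:ℤ) - k) - ((v:ℤ) - k) := by
    rw [Finset.offDiag_card, hn]
    have h1 : v - k ≤ (v - k) * (v - k) := Nat.le_mul_of_pos_left _ (by omega)
    rw [Nat.cast_sub h1]
    push_cast [Nat.cast_sub hkv.le]
    ring
  have hcardb : ((b - 1 : ℕ) : ℤ) = (b : ℤ) - 1 := by
    rw [Nat.cast_sub hbpos]; push_cast; ring
  rw [hcard1, hcard2] at hsum
  rw [nsmul_eq_mul, hcardb] at hsum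
  -- move to ℝ
  have HR : 2 * (ℓ:ℝ) * ((k:ℝ) * ((v:ℝ) - k))
      ≤ ((b:ℝ) - 1) * ((ℓ:ℝ)^2 + ℓ) + (((v:ℝ) - k) * ((v:ℝ) - k) - ((v:ℝ) - k)) := by
    exact_mod_cast hsum
  have hden : (0:ℝ) < (ℓ:ℝ)^2 + ℓ := by
    have h1 : (1:ℝ) ≤ (ℓ:ℝ) := by exact_mod_cast hℓ
    nlinarith
  rw [ge_iff_le, add_comm, ← le_sub_iff_add_le, div_le_iff₀ hden]
  have hexp : (2 * (ℓ:ℝ) * k - v + k + 1) * ((v:ℝ) - k)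
      = 2 * (ℓ:ℝ) * ((k:ℝ) * ((v:ℝ) - k))
        - (((v:ℝ) - k) * ((v:ℝ) - k) - ((v:ℝ) - k)) := by ring
  linarith [HR]
end

section
/- Let A be an m × n 0–1 matrix where every row has weight r and the inner product of any two distinct rows is at most λ with r > λ. Let ℓ = ⌊mr/n⌋ and write mr = nℓ + t with 0 ≤ t ≤ n−1. Then m(m−1)λ ≥ (n−t)ℓ² + t(ℓ+1)² − mr. -/
/-!
Let `c j` be the `j`-th column sum of `A`. Expanding `∑ j, c j ^ 2` gives the sum of all pairwise
row inner products, at most `m r + m (m - 1) λ`. On the other hand the `c j` are integers summing to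
`m r = n ℓ + t`, and for integers `c² ≥ (2ℓ + 1) c - ℓ (ℓ + 1)` (equality at `c = ℓ, ℓ + 1`), so
`∑ j, c j ^ 2 ≥ (n - t) ℓ² + t (ℓ + 1)²`.
-/

open Finset

theorem Int.two_mul_add_one_mul_sub_le_sq (c l : ℤ) : (2 * l + 1) * c - l * (l + 1) ≤ c ^ 2 := by
  rcases le_or_gt c l with h | h <;> nlinarith

theorem Int.sum_sq_ge_of_sum_eq {ι : Type*} (s : Finset ι) (c : ι → ℤ) (l t : ℤ)
    (hsum : ∑ i ∈ s, c i = #s * l + t) :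
    (#s - t) * l ^ 2 + t * (l + 1) ^ 2 ≤ ∑ i ∈ s, c i ^ 2 :=
  calc (#s - t) * l ^ 2 + t * (l + 1) ^ 2
      = ∑ i ∈ s, ((2 * l + 1) * c i - l * (l + 1)) := by
        rw [sum_sub_distrib, ← mul_sum, hsum, sum_const, nsmul_eq_mul]; ring
    _ ≤ ∑ i ∈ s, c i ^ 2 := sum_le_sum fun i _ => Int.two_mul_add_one_mul_sub_le_sq (c i) l

theorem sum_sq_sum_eq_sum_sum_sum_mul {ι κ R : Type*} [Fintype ι] [Fintype κ] [CommSemiring R]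
    (A : ι → κ → R) :
    ∑ j, (∑ i, A i j) ^ 2 = ∑ i, ∑ i', ∑ j, A i j * A i' j := by
  simp_rw [sq, sum_mul_sum]
  rw [sum_comm]
  exact sum_congr rfl fun i _ => sum_comm

theorem sum_sum_le_of_diag_le_of_offDiag_le {ι : Type*} [Fintype ι] [DecidableEq ι]
    (G : ι → ι → ℤ) (r lam : ℤ) (hdiag : ∀ i, G i i ≤ r)
    (hoff : ∀ i i', i ≠ i' → G i i' ≤ lam) :
    ∑ i, ∑ i', G i i' ≤ Fintype.card ι * (r + (Fintype.card ι - 1) * lam) := by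
  have hrow (i : ι) : ∑ i', G i i' ≤ r + (Fintype.card ι - 1) * lam := by
    rw [← add_sum_erase _ _ (mem_univ i)]
    refine add_le_add (hdiag i) ?_
    calc ∑ i' ∈ univ.erase i, G i i'
        ≤ ∑ _i' ∈ univ.erase i, lam :=
          sum_le_sum fun i' hi' => hoff i i' (ne_of_mem_erase hi').symm
      _ = (Fintype.card ι - 1) * lam := by
          rw [sum_const, nsmul_eq_mul, cast_card_erase_of_mem (mem_univ i), card_univ]
  calc ∑ i, ∑ i', G i i' ≤ ∑ _i : ι, (r + (Fintype.card ι - 1) * lam) :=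
        sum_le_sum fun i _ => hrow i
    _ = Fintype.card ι * (r + (Fintype.card ι - 1) * lam) := by
        rw [sum_const, nsmul_eq_mul, card_univ]

theorem johnson_improved_general (m n r lam ℓ t : ℕ)
    (A : Fin m → Fin n → ℕ)
    (h01 : ∀ i j, A i j = 0 ∨ A i j = 1)
    (hrow : ∀ i, ∑ j, A i j = r)
    (hip : ∀ i i' : Fin m, i ≠ i' → ∑ j, A i j * A i' j ≤ lam)
    (ht : m * r = n * ℓ + t) :
    (m : ℤ) * ((m : ℤ) - 1) * lam ≥
      ((n : ℤ) - t) * (ℓ : ℤ) ^ 2 + (t : ℤ) * ((ℓ : ℤ) + 1) ^ 2 - (m : ℤ) * r := by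
  have hrowZ (i : Fin m) : ∑ j, (A i j : ℤ) = r := by exact_mod_cast hrow i
  have hcolSum : ∑ j, ∑ i, (A i j : ℤ) = n * ℓ + t := by
    rw [sum_comm]
    simp only [hrowZ, sum_const, card_univ, Fintype.card_fin, nsmul_eq_mul]
    exact_mod_cast ht
  have hdiag (i : Fin m) : ∑ j, (A i j : ℤ) * A i j ≤ r := by
    have hidem (j : Fin n) : (A i j : ℤ) * A i j = A i j := by
      rcases h01 i j with h | h <;> simp [h]
    simp only [hidem, hrowZ, le_refl]
  have hoff (i i' : Fin m) (hne : i ≠ i') : ∑ j, (A i j : ℤ) * A i' j ≤ lam := by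
    exact_mod_cast hip i i' hne
  have hupper := sum_sum_le_of_diag_le_of_offDiag_le _ r lam hdiag hoff
  rw [← sum_sq_sum_eq_sum_sum_sum_mul] at hupper
  have hlower :=
    Int.sum_sq_ge_of_sum_eq univ (fun j => ∑ i, (A i j : ℤ)) ℓ t (by simpa using hcolSum)
  simp only [card_univ, Fintype.card_fin] at hupper hlower
  have hmr : (m : ℤ) * r = n * ℓ + t := by exact_mod_cast ht
  linarith

theorem johnson_improved (m n r lam ℓ t : ℕ) (hn : 0 < n)
    (A : Fin m → Fin n → ℕ)
    (h01 : ∀ i j, A i j = 0 ∨ A i j = 1)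
    (hrow : ∀ i, ∑ j, A i j = r)
    (hip : ∀ i i' : Fin m, i ≠ i' → ∑ j, A i j * A i' j ≤ lam)
    (hrl : r > lam)
    (hℓ : ℓ = m * r / n) (ht : m * r = n * ℓ + t) (htn : t ≤ n - 1) :
    (m : ℤ) * ((m : ℤ) - 1) * lam ≥
      ((n : ℤ) - t) * (ℓ : ℤ) ^ 2 + (t : ℤ) * ((ℓ : ℤ) + 1) ^ 2 - (m : ℤ) * r :=
  johnson_improved_general m n r lam ℓ t A h01 hrow hip ht
end
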